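/- arXiv:1611.08835 — 7 statements merged into one kernel-verified Lean document; each statement's English description precedes it below -/
import Mathlib

section
/- Let $r_i, r_j, r_k, r_l > 0$ with $r_i = \min\{r_i, r_j, r_k, r_l\}$. If $Q^{\mathbb{E}}_{ijkl} = 0$, then $\tfrac{1}{r_j}+\tfrac{1}{r_k}+\tfrac{1}{r_l} - \tfrac{1}{r_i} < 0$. -/
theorem stmt_1 (ri rj rk rl : ℝ) (hi : 0 < ri) (hj : 0 < rj) (hk : 0 < rk) (hl : 0 < rl)
    (hmin : ri ≤ rj ∧ ri ≤ rk ∧ ri ≤ rl)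
    (hQ : (1/ri + 1/rj + 1/rk + 1/rl)^2 - 2*(1/ri^2 + 1/rj^2 + 1/rk^2 + 1/rl^2) = 0) :
    1/rj + 1/rk + 1/rl - 1/ri < 0 := by
  obtain ⟨h1, h2, h3⟩ := hmin
  have e : ∀ x : ℝ, 1/x^2 = (1/x)^2 := fun x => by rw [div_pow, one_pow]
  rw [e, e, e, e] at hQ
  set a := 1/ri with hA
  set b := 1/rj with hB
  set c := 1/rk with hC
  set d := 1/rl with hD
  have ha : 0 < a := by positivity
  have hb : 0 < b := by positivity
  have hc : 0 < c := by positivity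
  have hd : 0 < d := by positivity
  have hab : b ≤ a := one_div_le_one_div_of_le hi h1
  have hac : c ≤ a := one_div_le_one_div_of_le hi h2
  have had : d ≤ a := one_div_le_one_div_of_le hi h3
  by_contra h
  push_neg at h
  nlinarith [mul_pos hb hc, mul_pos hb hd, mul_pos hc hd,
    mul_nonneg (sub_nonneg.2 hab) hb.le, mul_nonneg (sub_nonneg.2 hac) hc.le,
    mul_nonneg (sub_nonneg.2 had) hd.le, mul_pos ha (add_pos (add_pos hb hc) hd)]
end

section
/- Let $r_i, r_j, r_k, r_l > 0$ with $r_i = \min\{r_i, r_j, r_k, r_l\}$ and $Q^{\mathbb{E}}_{ijkl} = 0$. Then $\frac{\partial Q^{\mathbb{E}}_{ijkl}}{\partial r_i} = -\frac{2}{r_i^2}\left(\frac{1}{r_j}+\frac{1}{r_k}+\frac{1}{r_l}-\frac{1}{r_i}\right) > 0$. -/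
/-!
In curvatures `a = 1/rᵢ, b, c, d`, the relation `Q = 0` reads `(b + c + d - a)² = 4(bc + cd + db)`.
If `a` is the largest curvature and yet `t = b + c + d - a ≥ 0`, then `t ≤ c + d`, `t ≤ b + c`,
`t ≤ b + d`, whence `t² ≤ t (c + d) ≤ bc + bd + 2cd < 4(bc + cd + db)`, a contradiction.
So `a > b + c + d`, which is exactly the sign of the derivative `-(2/rᵢ²)(b + c + d - a)`.
-/

lemma hasDerivAt_sq_inv_add_sub (s q : ℝ) {x : ℝ} (hx : x ≠ 0) :
    HasDerivAt (fun y : ℝ => (1/y + s)^2 - 2*(1/y^2 + q)) (-(2/x^2) * (s - 1/x)) x := by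
  have hinv : HasDerivAt (fun y : ℝ => 1/y) (-(x^2)⁻¹) x := by
    simpa [one_div] using hasDerivAt_inv hx
  have hinv_sq : HasDerivAt (fun y : ℝ => 1/y^2) (-(2 * x ^ 1) / (x^2)^2) x := by
    simpa [one_div] using (hasDerivAt_pow 2 x).fun_inv (pow_ne_zero 2 hx)
  have hsq : HasDerivAt (fun y : ℝ => (1/y + s)^2) (2 * (1/x + s) ^ 1 * (-(x^2)⁻¹)) x :=
    (hinv.add_const s).pow 2
  refine (hsq.fun_sub ((hinv_sq.add_const q).const_mul 2)).congr_deriv ?_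
  field_simp
  ring

lemma add_add_lt_of_descartes {a b c d : ℝ} (hb : 0 < b) (hc : 0 < c) (hd : 0 < d)
    (hab : b ≤ a) (hac : c ≤ a) (had : d ≤ a)
    (hQ : (a + b + c + d)^2 = 2*(a^2 + b^2 + c^2 + d^2)) :
    b + c + d < a := by
  by_contra! h
  set t := b + c + d - a with ht_def
  have ht : t^2 = 4*(b*c + c*d + d*b) := by rw [ht_def]; linear_combination (-1 : ℝ) * hQ
  have htcd : t^2 ≤ t*(c + d) := by
    rw [sq]; exact mul_le_mul_of_nonneg_left (by linarith) (by linarith)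
  have htc : t*c ≤ (b + d)*c := mul_le_mul_of_nonneg_right (by linarith) hc.le
  have htd : t*d ≤ (b + c)*d := mul_le_mul_of_nonneg_right (by linarith) hd.le
  nlinarith [mul_pos hb hc, mul_pos hb hd, mul_pos hc hd]

theorem stmt_2 (ri rj rk rl : ℝ) (hi : 0 < ri) (hj : 0 < rj) (hk : 0 < rk) (hl : 0 < rl)
    (hmin : ri ≤ rj ∧ ri ≤ rk ∧ ri ≤ rl)
    (hQ : (1/ri + 1/rj + 1/rk + 1/rl)^2 - 2*(1/ri^2 + 1/rj^2 + 1/rk^2 + 1/rl^2) = 0) :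
    deriv (fun x : ℝ => (1/x + 1/rj + 1/rk + 1/rl)^2 - 2*(1/x^2 + 1/rj^2 + 1/rk^2 + 1/rl^2)) ri
      = -(2/ri^2) * (1/rj + 1/rk + 1/rl - 1/ri)
    ∧ 0 < -(2/ri^2) * (1/rj + 1/rk + 1/rl - 1/ri) := by
  obtain ⟨hij, hik, hil⟩ := hmin
  constructor
  · have hfun : (fun x : ℝ => (1/x + 1/rj + 1/rk + 1/rl)^2 - 2*(1/x^2 + 1/rj^2 + 1/rk^2 + 1/rl^2))
        = fun x => (1/x + (1/rj + 1/rk + 1/rl))^2 - 2*(1/x^2 + (1/rj^2 + 1/rk^2 + 1/rl^2)) := by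
      funext x
      ring
    rw [hfun]
    exact (hasDerivAt_sq_inv_add_sub _ _ hi.ne').deriv
  · have hlt : 1/rj + 1/rk + 1/rl < 1/ri := by
      refine add_add_lt_of_descartes (by positivity) (by positivity) (by positivity)
        (one_div_le_one_div_of_le hi hij) (one_div_le_one_div_of_le hi hik)
        (one_div_le_one_div_of_le hi hil) ?_
      simp only [one_div_pow]
      linarith
    rw [neg_mul, ← mul_neg, neg_sub]
    exact mul_pos (by positivity) (sub_pos.mpr hlt)
end

section
/- Let $r_j, r_k, r_l > 0$ with $A > 0$, where $A = 2r_jr_kr_l^2 + 2r_jr_lr_k^2 + 2r_kr_lr_j^2 - r_k^2r_l^2 - r_j^2r_l^2 - r_j^2r_k^2$. Then the quantities $\sqrt{r_jr_k}, \sqrt{r_jr_l}, \sqrt{r_kr_l}$ satisfy all three strict triangle inequalities. -/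
theorem stmt_6 (rj rk rl : ℝ) (hj : 0 < rj) (hk : 0 < rk) (hl : 0 < rl)
    (hA : 0 < 2*rj*rk*rl^2 + 2*rj*rl*rk^2 + 2*rk*rl*rj^2 - rk^2*rl^2 - rj^2*rl^2 - rj^2*rk^2) :
    Real.sqrt (rj*rk) < Real.sqrt (rj*rl) + Real.sqrt (rk*rl)
    ∧ Real.sqrt (rj*rl) < Real.sqrt (rj*rk) + Real.sqrt (rk*rl)
    ∧ Real.sqrt (rk*rl) < Real.sqrt (rj*rk) + Real.sqrt (rj*rl) := by
  set a := Real.sqrt (rj*rk) with ha'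
  set b := Real.sqrt (rj*rl) with hb'
  set c := Real.sqrt (rk*rl) with hc'
  have ha2 : a^2 = rj*rk := Real.sq_sqrt (by positivity)
  have hb2 : b^2 = rj*rl := Real.sq_sqrt (by positivity)
  have hc2 : c^2 = rk*rl := Real.sq_sqrt (by positivity)
  have hap : 0 < a := Real.sqrt_pos.mpr (by positivity)
  have hbp : 0 < b := Real.sqrt_pos.mpr (by positivity)
  have hcp : 0 < c := Real.sqrt_pos.mpr (by positivity)
  have hA' : 0 < 2*a^2*b^2 + 2*a^2*c^2 + 2*b^2*c^2 - a^4 - b^4 - c^4 := by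
    have : a^4 = (a^2)^2 := by ring
    nlinarith [sq_nonneg a, sq_nonneg b, sq_nonneg c]
  refine ⟨?_, ?_, ?_⟩
  · by_contra h
    push_neg at h
    have : 0 ≤ (a+b+c)*(a-b+c)*(a+b-c)*(a-b-c) :=
      mul_nonneg (mul_nonneg (mul_nonneg (by linarith) (by linarith)) (by linarith)) (by linarith)
    nlinarith [this]
  · by_contra h
    push_neg at h
    have : 0 ≤ (a+b+c)*(b-a+c)*(a+b-c)*(b-a-c) :=
      mul_nonneg (mul_nonneg (mul_nonneg (by linarith) (by linarith)) (by linarith)) (by linarith)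
    nlinarith [this]
  · by_contra h
    push_neg at h
    have : 0 ≤ (a+b+c)*(a-b+c)*(c-a+b)*(c-a-b) :=
      mul_nonneg (mul_nonneg (mul_nonneg (by linarith) (by linarith)) (by linarith)) (by linarith)
    nlinarith [this]
end

section
/- Let $r_j \le r_k \le r_l$ be positive reals with $A < 0$ (where $A = 2r_jr_kr_l^2 + 2r_jr_lr_k^2 + 2r_kr_lr_j^2 - r_k^2r_l^2 - r_j^2r_l^2 - r_j^2r_k^2$). Then the smaller positive root of $Ax^2 + Bx + C$ satisfies $\frac{-B - \sqrt{B^2-4AC}}{2A} > r_j$. -/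
theorem stmt_11 (rj rk rl : ℝ) (hj : 0 < rj) (hjk : rj ≤ rk) (hkl : rk ≤ rl)
    (A B C : ℝ)
    (hA : A = 2*rj*rk*rl^2 + 2*rj*rl*rk^2 + 2*rk*rl*rj^2 - rk^2*rl^2 - rj^2*rl^2 - rj^2*rk^2)
    (hB : B = 2*rj*rk*rl*(rk*rl + rj*rl + rj*rk))
    (hC : C = -(rj^2*rk^2*rl^2))
    (hAneg : A < 0) :
    rj < (-B - Real.sqrt (B^2 - 4*A*C)) / (2*A) := by
  have hk : (0:ℝ) < rk := lt_of_lt_of_le hj hjk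
  have hl : (0:ℝ) < rl := lt_of_lt_of_le hk hkl
  have hf : 0 < A*rj^2 + B*rj + C := by
    subst hA hB hC
    have a1 : 0 < rj^3*(rl^2*(4*rk-rj)) := by
      exact mul_pos (by positivity) (mul_pos (pow_pos hl 2) (by linarith))
    have a2 : 0 < rj^3*(rk^2*(4*rl-rj)) := by
      exact mul_pos (by positivity) (mul_pos (pow_pos hk 2) (by linarith))
    have a3 : 0 < rj^4*(rk*rl) := by positivity
    nlinarith [a1, a2, a3]
  have hD : 0 < B^2 - 4*A*C := by nlinarith [sq_nonneg (2*A*rj + B)]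
  set s := Real.sqrt (B^2 - 4*A*C) with hs
  have hs0 : 0 ≤ s := Real.sqrt_nonneg _
  have hs2 : s^2 = B^2 - 4*A*C := Real.sq_sqrt hD.le
  have h2A : 2*A < 0 := by linarith
  rw [lt_div_iff_of_neg h2A]
  have key : s^2 > (B + 2*A*rj)^2 := by nlinarith
  nlinarith [sq_nonneg (s + (B + 2*A*rj)), sq_nonneg (s - (B + 2*A*rj))]
end

section
/- Let $r_j, r_k, r_l > 0$ with $A < 0$ and $r_j \le r_k \le r_l$. Then $\frac{1}{\sqrt{r_j}} > \frac{1}{\sqrt{r_k}} + \frac{1}{\sqrt{r_l}}$. -/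
theorem stmt_12 (rj rk rl : ℝ) (hj : 0 < rj) (hjk : rj ≤ rk) (hkl : rk ≤ rl)
    (hAneg : 2*rj*rk*rl^2 + 2*rj*rl*rk^2 + 2*rk*rl*rj^2 - rk^2*rl^2 - rj^2*rl^2 - rj^2*rk^2 < 0) :
    1 / Real.sqrt rk + 1 / Real.sqrt rl < 1 / Real.sqrt rj := by
  have hk : 0 < rk := lt_of_lt_of_le hj hjk
  have hl : 0 < rl := lt_of_lt_of_le hk hkl
  set a := Real.sqrt rj with hadef
  set b := Real.sqrt rk with hbdef
  set c := Real.sqrt rl with hcdef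
  have ha : 0 < a := Real.sqrt_pos.mpr hj
  have hb : 0 < b := Real.sqrt_pos.mpr hk
  have hc : 0 < c := Real.sqrt_pos.mpr hl
  have ha2 : a ^ 2 = rj := Real.sq_sqrt hj.le
  have hb2 : b ^ 2 = rk := Real.sq_sqrt hk.le
  have hc2 : c ^ 2 = rl := Real.sq_sqrt hl.le
  have hab : a ≤ b := Real.sqrt_le_sqrt hjk
  have hbc : b ≤ c := Real.sqrt_le_sqrt hkl
  rw [← ha2, ← hb2, ← hc2] at hAneg
  have key : a * b + a * c < b * c := by
    by_contra h
    push_neg at h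
    have f1 : 0 < b * c + c * a + a * b := by positivity
    have f2 : 0 ≤ c * a + a * b - b * c := by linarith [mul_comm a b, mul_comm c a]
    have f3 : 0 ≤ b * c - c * a + a * b := by nlinarith
    have f4 : 0 ≤ b * c + c * a - a * b := by nlinarith
    nlinarith [mul_nonneg (mul_nonneg (mul_nonneg f1.le f2) f3) f4]
  rw [div_add_div _ _ hb.ne' hc.ne', div_lt_div_iff₀ (by positivity) ha]
  nlinarith [key]
end

section
/- Let $F: \mathbb{R}^n_{>0} \to \mathbb{R}$ be a $C^1$ convex function, and let $\Omega \subseteq \mathbb{R}^n_{>0}$ be an open set on which $F$ is $C^2$ with Hessian positive semi-definite of rank $n-1$ and kernel spanned by the position vector $x$ at each point $x \in \Omega$. If $x, y \in \Omega$ satisfy $\nabla F(x) = \nabla F(y) = 0$ and $y$ is not a positive scalar multiple of $x$, then a contradiction arises; i.e., any two critical points of $F$ in $\Omega$ are positive scalar multiples of each other. -/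
/-!
A critical point of a convex function is a global minimum, so `F` is minimal at both `x` and `y`
and hence, by convexity, along the whole segment `[x, y]`. Every point of that segment is then a
critical point, so the gradient `∇F` vanishes on `[x, y]` and the Hessian at `x` kills `y - x`.
The kernel condition then gives `y - x ∈ ℝx`, and positivity of the coordinates makes `y` a
positive multiple of `x`.
-/

open Set Filter Topology

lemma isOpen_setOf_forall_pos {ι : Type*} [Finite ι] : IsOpen {x : ι → ℝ | ∀ i, 0 < x i} := by
  simpa only [ofPred_forall] using
    isOpen_iInter_of_finite fun i => isOpen_lt continuous_const (continuous_apply i)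

lemma exists_pos_smul_of_sub_eq_smul {ι : Type*} {x y : ι → ℝ} (hx : ∀ i, 0 < x i)
    (hy : ∀ i, 0 < y i) {t : ℝ} (h : y - x = t • x) : ∃ c : ℝ, 0 < c ∧ y = c • x := by
  have hyx : y = (1 + t) • x := by rw [add_smul, one_smul, ← h, add_sub_cancel]
  cases isEmpty_or_nonempty ι with
  | inl _ => exact ⟨1, one_pos, Subsingleton.elim _ _⟩
  | inr hι =>
    obtain ⟨i⟩ := hι
    have hyi : y i = (1 + t) * x i := by rw [hyx]; rfl
    exact ⟨1 + t, pos_of_mul_pos_left (hyi ▸ hy i) (hx i).le, hyx⟩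

section Convex

variable {E : Type*} [NormedAddCommGroup E] [NormedSpace ℝ E] {s : Set E} {f : E → ℝ}

lemma ConvexOn.isMinOn_of_hasFDerivAt_zero (hf : ConvexOn ℝ s f) {z : E} (hz : z ∈ s)
    (hfz : HasFDerivAt f (0 : E →L[ℝ] ℝ) z) : IsMinOn f s z := by
  intro w hw
  set L : ℝ →ᵃ[ℝ] E := AffineMap.lineMap z w
  have hL0 : L 0 = z := AffineMap.lineMap_apply_zero z w
  have hL1 : L 1 = w := AffineMap.lineMap_apply_one z w
  have hderiv : HasDerivAt (f ∘ L) 0 0 := by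
    simpa using (hL0 ▸ hfz).comp_hasDerivAt 0 AffineMap.hasDerivAt_lineMap
  have hslope := (hf.comp_affineMap L).le_slope_of_hasDerivAt
    (by simpa [hL0] using hz) (by simpa [hL1] using hw) one_pos hderiv
  rw [slope_def_field] at hslope
  simp only [Function.comp_apply, hL0, hL1, sub_zero, div_one] at hslope
  exact sub_nonneg.mp hslope

lemma ConvexOn.isMinOn_of_mem_segment (hf : ConvexOn ℝ s f) {x y z : E} (hx : x ∈ s) (hy : y ∈ s)
    (hfx : IsMinOn f s x) (hfy : IsMinOn f s y) (hz : z ∈ segment ℝ x y) : IsMinOn f s z :=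
  fun _ hw => (hf.le_max_of_mem_segment hx hy hz).trans (max_le (hfx hw) (hfy hw))

end Convex

lemma fderiv_apply_sub_eq_zero_of_eqOn_segment {E G : Type*} [NormedAddCommGroup E]
    [NormedSpace ℝ E] [NormedAddCommGroup G] [NormedSpace ℝ G] {g : E → G} {x y : E}
    (hg : DifferentiableAt ℝ g x) (h : EqOn g 0 (segment ℝ x y)) : fderiv ℝ g x (y - x) = 0 := by
  set γ : ℝ →ᵃ[ℝ] E := AffineMap.lineMap x y
  have hderiv : HasDerivWithinAt (g ∘ γ) (fderiv ℝ g x (y - x)) (Ici 0) 0 := by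
    have hgx : HasFDerivAt g (fderiv ℝ g x) (γ 0) := by simpa [γ] using hg.hasFDerivAt
    exact (hgx.comp_hasDerivAt 0 AffineMap.hasDerivAt_lineMap).hasDerivWithinAt
  have hzero : g ∘ γ =ᶠ[𝓝[≥] 0] fun _ => 0 := by
    filter_upwards [Icc_mem_nhdsGE (zero_lt_one' ℝ)] with t ht
    exact h (segment_eq_image_lineMap ℝ x y ▸ mem_image_of_mem γ ht)
  have hderiv0 : HasDerivWithinAt (g ∘ γ) 0 (Ici 0) 0 :=
    (hasDerivWithinAt_const 0 _ 0).congr_of_eventuallyEq hzero (hzero.eq_of_nhdsWithin self_mem_Ici)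
  exact (uniqueDiffWithinAt_Ici 0).eq_deriv _ hderiv hderiv0

theorem stmt_17_general {n : ℕ} (F : (Fin n → ℝ) → ℝ) (Ω : Set (Fin n → ℝ))
    (hΩopen : IsOpen Ω) (hΩsub : Ω ⊆ {x | ∀ i, 0 < x i})
    (hconv : ConvexOn ℝ {x | ∀ i, 0 < x i} F)
    (hC2 : ContDiffOn ℝ 2 F Ω)
    (hsemi : ∀ x ∈ Ω, ∀ v : Fin n → ℝ,
      0 ≤ fderiv ℝ (fderiv ℝ F) x v v ∧
      (fderiv ℝ (fderiv ℝ F) x v v = 0 ↔ ∃ t : ℝ, v = t • x))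
    (x y : Fin n → ℝ) (hx : x ∈ Ω) (hy : y ∈ Ω)
    (hgx : fderiv ℝ F x = 0) (hgy : fderiv ℝ F y = 0) :
    ∃ c : ℝ, 0 < c ∧ y = c • x := by
  have hF : ∀ z ∈ Ω, ContDiffAt ℝ 2 F z := fun z hz => hC2.contDiffAt (hΩopen.mem_nhds hz)
  have hmin : ∀ z ∈ Ω, fderiv ℝ F z = 0 → IsMinOn F {x | ∀ i, 0 < x i} z := fun z hz hz0 =>
    hconv.isMinOn_of_hasFDerivAt_zero (hΩsub hz)
      (hz0 ▸ ((hF z hz).differentiableAt two_ne_zero).hasFDerivAt)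
  have hcrit : EqOn (fderiv ℝ F) 0 (segment ℝ x y) := fun z hz =>
    have hzmin := hconv.isMinOn_of_mem_segment (hΩsub hx) (hΩsub hy) (hmin x hx hgx) (hmin y hy hgy) hz
    have hzS := hconv.1.segment_subset (hΩsub hx) (hΩsub hy) hz
    (hzmin.isLocalMin (isOpen_setOf_forall_pos.mem_nhds hzS)).fderiv_eq_zero
  have hF2 : DifferentiableAt ℝ (fderiv ℝ F) x :=
    ((hF x hx).fderiv_right (m := 1) le_rfl).differentiableAt one_ne_zero
  have hkernel : fderiv ℝ (fderiv ℝ F) x (y - x) (y - x) = 0 := by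
    rw [fderiv_apply_sub_eq_zero_of_eqOn_segment hF2 hcrit, zero_apply]
  obtain ⟨t, ht⟩ := (hsemi x hx (y - x)).2.mp hkernel
  exact exists_pos_smul_of_sub_eq_smul (hΩsub hx) (hΩsub hy) ht

theorem stmt_17 {n : ℕ} (F : (Fin n → ℝ) → ℝ) (Ω : Set (Fin n → ℝ))
    (hΩopen : IsOpen Ω) (hΩsub : Ω ⊆ {x | ∀ i, 0 < x i})
    (hconv : ConvexOn ℝ {x | ∀ i, 0 < x i} F)
    (hC1 : ContDiffOn ℝ 1 F {x : Fin n → ℝ | ∀ i, 0 < x i})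
    (hC2 : ContDiffOn ℝ 2 F Ω)
    (hsemi : ∀ x ∈ Ω, ∀ v : Fin n → ℝ,
      0 ≤ fderiv ℝ (fderiv ℝ F) x v v ∧
      (fderiv ℝ (fderiv ℝ F) x v v = 0 ↔ ∃ t : ℝ, v = t • x))
    (x y : Fin n → ℝ) (hx : x ∈ Ω) (hy : y ∈ Ω)
    (hgx : fderiv ℝ F x = 0) (hgy : fderiv ℝ F y = 0) :
    ∃ c : ℝ, 0 < c ∧ y = c • x :=
  stmt_17_general F Ω hΩopen hΩsub hconv hC2 hsemi x y hx hy hgx hgy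
end

section
/- For positive reals $r_j, r_k, r_l$, if $\sqrt{r_jr_k} + \sqrt{r_jr_l} = \sqrt{r_kr_l}$, then $A = 0$ and the unique root of $Bx + C = 0$ is $x = -C/B = \frac{r_jr_kr_l}{2(r_kr_l + r_jr_l + r_jr_k)} > 0$. -/
theorem stmt_18 (rj rk rl : ℝ) (hj : 0 < rj) (hk : 0 < rk) (hl : 0 < rl)
    (h : Real.sqrt (rj*rk) + Real.sqrt (rj*rl) = Real.sqrt (rk*rl)) :
    (2*rj*rk*rl^2 + 2*rj*rl*rk^2 + 2*rk*rl*rj^2 - rk^2*rl^2 - rj^2*rl^2 - rj^2*rk^2 = 0)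
    ∧ (∀ x : ℝ, (2*rj*rk*rl*(rk*rl + rj*rl + rj*rk)) * x + (-(rj^2*rk^2*rl^2)) = 0
        ↔ x = rj*rk*rl / (2*(rk*rl + rj*rl + rj*rk)))
    ∧ 0 < rj*rk*rl / (2*(rk*rl + rj*rl + rj*rk)) := by
  have hjk : (0:ℝ) ≤ rj*rk := by positivity
  have hjl : (0:ℝ) ≤ rj*rl := by positivity
  have hkl : (0:ℝ) ≤ rk*rl := by positivity
  have h1 : rj*rk + 2 * (Real.sqrt (rj*rk) * Real.sqrt (rj*rl)) + rj*rl = rk*rl := by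
    have := congrArg (· ^ 2) h
    simpa [add_sq, Real.sq_sqrt hjk, Real.sq_sqrt hjl, Real.sq_sqrt hkl,
      mul_comm, mul_assoc, mul_left_comm] using this
  have h2 : Real.sqrt (rj*rk) * Real.sqrt (rj*rl) = Real.sqrt ((rj*rk)*(rj*rl)) := by
    rw [Real.sqrt_mul hjk]
  have h3 : (2:ℝ) * Real.sqrt ((rj*rk)*(rj*rl)) = rk*rl - rj*rk - rj*rl := by
    rw [← h2]; linarith
  have h4 : ((2:ℝ) * Real.sqrt ((rj*rk)*(rj*rl)))^2 = (rk*rl - rj*rk - rj*rl)^2 := by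
    rw [h3]
  have h5 : (2:ℝ)^2 * ((rj*rk)*(rj*rl)) = (rk*rl - rj*rk - rj*rl)^2 := by
    rw [← h4, mul_pow, Real.sq_sqrt (by positivity)]
  have hA : 2*rj*rk*rl^2 + 2*rj*rl*rk^2 + 2*rk*rl*rj^2 - rk^2*rl^2 - rj^2*rl^2 - rj^2*rk^2 = 0 := by
    nlinarith [h5]
  have hS : (0:ℝ) < rk*rl + rj*rl + rj*rk := by positivity
  refine ⟨hA, fun x => ?_, by positivity⟩
  have hB : (0:ℝ) < 2*rj*rk*rl*(rk*rl + rj*rl + rj*rk) := by positivity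
  constructor
  · intro hx
    field_simp
    nlinarith [hx]
  · intro hx
    subst hx
    field_simp
    ring
end
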